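/- Let V be a finite nonempty type with |V| ≤ n, α a linearly ordered type, and p ≥ 1 a natural number with n ≥ p + 1. Let G : ℕ → SimpleGraph V be a sequence of simple graphs on V, each having at most p connected components, and let m : ℕ → V → α satisfy m(t+1) = step(G(t), m(t)) for all t. Then for every t ≥ p(n − p − 1) + 1, the image of m(t) contains at most p distinct values. (The min-propagation algorithm solves p-agreement in p(n−p−1)+1 rounds on any p-partitioned dynamic network with at most n processes.) -/

import Mathlib

/-!
Rank each vertex by the number of distinct values below its own, and use the potential
`Φ_p(m) = ∑ᵥ (p - rk m v)`. Min-update creates no new values and lowers every value, so ranks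
never rise and `Φ_p` never drops. While more than `p` values survive, the vertices carrying the
`p + 1` smallest values cannot lie in pairwise different components of a graph with at most `p`
components; so some edge joins a vertex of rank `< p` to a larger value, and `Φ_p` strictly
increases. Since every rank `i < c` is attained, where `c` is the number of values, `Φ_p` lies
between `∑_{i<c} (p - i)` and that sum plus `p (|V| - c)`; as long as `c > p` it can therefore
increase at most `p (n - p - 1)` times.
-/

open Finset in
/-- The rank of a vertex `v` under value assignment `m`: the number of distinct
values in the image of `m` that are strictly smaller than `m v`. -/
def rk {V α : Type*} [Fintype V] [LinearOrder α] (m : V → α) (v : V) : ℕ :=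
  ((univ.image m).filter (· < m v)).card

open scoped Classical in
/-- One min-update step: each vertex takes the minimum of `m` over its closed
neighborhood `{v} ∪ {u : G.Adj u v}`. -/
noncomputable def step {V α : Type*} [Fintype V] [LinearOrder α]
    (G : SimpleGraph V) (m : V → α) (v : V) : α :=
  (insert v (Finset.univ.filter (fun u => G.Adj u v))).inf'
    (Finset.insert_nonempty _ _) m

/-- The potential function `Φ_k(m) = Σ_v (k - r_m(v))` (truncated subtraction). -/
def Phi {V α : Type*} [Fintype V] [LinearOrder α] (k : ℕ) (m : V → α) : ℕ :=
  ∑ v, (k - rk m v)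

open Finset

namespace Finset

variable {ι κ M : Type*} [DecidableEq κ] [AddCommMonoid M] [PartialOrder M] [IsOrderedAddMonoid M]

theorem sum_comp_le_sum_image_add_nsmul (s : Finset ι) (f : ι → κ) {g : κ → M} {b : M}
    (hg : ∀ i ∈ s, g (f i) ≤ b) :
    ∑ i ∈ s, g (f i) ≤ ∑ k ∈ s.image f, g k + (#s - #(s.image f)) • b := by
  classical
  obtain ⟨u, hus, hinj, himg⟩ :=
    exists_subset_injOn_image_eq_of_surjOn (f := f) s (s.image f) (by simp [Set.SurjOn])
  have hus : u ⊆ s := mod_cast hus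
  have hcard : #(s \ u) = #s - #(s.image f) := by
    rw [card_sdiff_of_subset hus, ← himg, card_image_of_injOn hinj]
  calc ∑ i ∈ s, g (f i) = ∑ i ∈ u, g (f i) + ∑ i ∈ s \ u, g (f i) := by
        rw [add_comm, sum_sdiff hus]
    _ ≤ ∑ k ∈ s.image f, g k + (#s - #(s.image f)) • b := by
        rw [← hcard, ← himg, sum_image hinj]
        gcongr
        exact sum_le_card_nsmul _ _ _ fun i hi => hg i (mem_sdiff.mp hi).1

end Finset

section LowerCount

variable {α : Type*} [LinearOrder α] {s : Finset α} {a b : α}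

theorem card_filter_lt_lt_card_filter_lt (ha : a ∈ s) (hab : a < b) :
    #{x ∈ s | x < a} < #{x ∈ s | x < b} := by
  refine card_lt_card ⟨fun x hx => ?_, fun h => ?_⟩
  · rw [mem_filter] at hx ⊢
    exact ⟨hx.1, hx.2.trans hab⟩
  · exact lt_irrefl a (mem_filter.mp (h (mem_filter.mpr ⟨ha, hab⟩))).2

theorem card_filter_lt_lt_card (ha : a ∈ s) : #{x ∈ s | x < a} < #s :=
  card_lt_card (filter_ssubset.mpr ⟨a, ha, lt_irrefl a⟩)

theorem image_card_filter_lt (s : Finset α) :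
    s.image (fun a => #{x ∈ s | x < a}) = range #s := by
  have hinj : Set.InjOn (fun a => #{x ∈ s | x < a}) s := fun a ha b hb hab => by
    by_contra hne
    rcases lt_or_gt_of_ne hne with h | h
    · exact (card_filter_lt_lt_card_filter_lt ha h).ne hab
    · exact (card_filter_lt_lt_card_filter_lt hb h).ne hab.symm
  refine eq_of_subset_of_card_le (fun k hk => ?_) (by rw [card_range, card_image_of_injOn hinj])
  obtain ⟨a, ha, rfl⟩ := mem_image.mp hk
  exact mem_range.mpr (card_filter_lt_lt_card ha)

end LowerCount

section MinPropagation

variable {V α : Type*} [Fintype V] [LinearOrder α] {G : SimpleGraph V} {m m' : V → α}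
  {p : ℕ}

theorem rk_lt_rk {x y : V} (h : m x < m y) : rk m x < rk m y :=
  card_filter_lt_lt_card_filter_lt (mem_image_of_mem m (mem_univ x)) h

theorem rk_le_rk_of_image_subset (himg : univ.image m' ⊆ univ.image m) {u v : V}
    (h : m' v ≤ m u) : rk m' v ≤ rk m u :=
  card_le_card fun a ha => by
    rw [mem_filter] at ha ⊢
    exact ⟨himg ha.1, ha.2.trans_le h⟩

theorem image_rk (m : V → α) : univ.image (rk m) = range #(univ.image m) := by
  rw [← image_card_filter_lt, image_image]
  rfl

theorem step_le_self (G : SimpleGraph V) (m : V → α) (v : V) : step G m v ≤ m v := by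
  classical
  exact inf'_le _ (mem_insert_self _ _)

theorem step_le_of_adj {u v : V} (h : G.Adj u v) : step G m v ≤ m u := by
  classical
  exact inf'_le _ (mem_insert_of_mem (mem_filter.mpr ⟨mem_univ u, h⟩))

theorem image_step_subset (G : SimpleGraph V) (m : V → α) :
    univ.image (step G m) ⊆ univ.image m := by
  classical
  intro a ha
  obtain ⟨v, -, rfl⟩ := mem_image.mp ha
  obtain ⟨u, -, hu⟩ := exists_mem_eq_inf' (insert_nonempty v {u | G.Adj u v}) m
  exact mem_image.mpr ⟨u, mem_univ u, hu.symm⟩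

theorem exists_adj_rk_lt_of_card_connectedComponent_le
    (hc : p < #(univ.image m)) (hG : Nat.card G.ConnectedComponent ≤ p) :
    ∃ x y, G.Adj x y ∧ rk m x < p ∧ m x < m y := by
  by_contra! hno
  have hconst : ∀ x y, G.Reachable x y → rk m x < p → m y = m x := by
    intro x y hxy hx
    rw [SimpleGraph.reachable_iff_reflTransGen] at hxy
    induction hxy with
    | refl => rfl
    | @tail b c _ hbc ih =>
      have hb : rk m b < p := by rwa [rk, ih]
      have hcb : m b ≤ m c := le_of_not_gt fun hlt =>
        (hno c b hbc.symm ((rk_lt_rk hlt).trans hb)).not_gt hlt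
      exact ((hno b c hbc hb).antisymm hcb).trans ih
  have hrank : ∀ i : Fin (p + 1), ∃ v, rk m v = i := fun i => by
    have : (i : ℕ) ∈ univ.image (rk m) := by rw [image_rk]; exact mem_range.mpr (by omega)
    simpa using this
  choose v hv using hrank
  have hsep : ∀ i j : Fin (p + 1), i < j → ¬ G.Reachable (v i) (v j) := by
    intro i j hij hreach
    have hi : rk m (v i) < p := by rw [hv]; omega
    have hrk : rk m (v j) = rk m (v i) := by rw [rk, rk, hconst _ _ hreach hi]
    rw [hv, hv] at hrk
    exact hij.ne' (Fin.ext hrk)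
  have hinj : Function.Injective (G.connectedComponentMk ∘ v) := by
    intro i j hij
    have hreach := SimpleGraph.ConnectedComponent.exact hij
    rcases lt_trichotomy i j with h | h | h
    · exact (hsep i j h hreach).elim
    · exact h
    · exact (hsep j i h hreach.symm).elim
  have := Nat.card_le_card_of_injective _ hinj
  rw [Nat.card_fin] at this
  omega

theorem Phi_lt_Phi_step (hc : p < #(univ.image m))
    (hG : Nat.card G.ConnectedComponent ≤ p) : Phi p m < Phi p (step G m) := by
  obtain ⟨x, y, hxy, hx, hlt⟩ := exists_adj_rk_lt_of_card_connectedComponent_le hc hG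
  have hrk : ∀ u v, step G m v ≤ m u → rk (step G m) v ≤ rk m u :=
    fun u v => rk_le_rk_of_image_subset (image_step_subset G m)
  refine sum_lt_sum (fun v _ => Nat.sub_le_sub_left (hrk v v (step_le_self G m v)) p)
    ⟨y, mem_univ y, ?_⟩
  have := hrk x y (step_le_of_adj hxy)
  have := rk_lt_rk hlt
  omega

theorem sum_range_le_Phi (p : ℕ) (m : V → α) :
    ∑ i ∈ range #(univ.image m), (p - i) ≤ Phi p m := by
  rw [← image_rk]
  exact sum_image_le_of_nonneg fun _ _ => Nat.zero_le _

theorem Phi_le_sum_range_add (p : ℕ) (m : V → α) :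
    Phi p m ≤ ∑ i ∈ range #(univ.image m), (p - i) + (Fintype.card V - #(univ.image m)) * p := by
  have := sum_comp_le_sum_image_add_nsmul univ (rk m) (g := (p - ·)) (b := p)
    fun _ _ => Nat.sub_le p _
  rwa [image_rk, card_range, smul_eq_mul] at this

end MinPropagation

theorem p_agreement_rounds_general {V α : Type*} [Fintype V]
    [LinearOrder α] (n p : ℕ)
    (hcard : Fintype.card V ≤ n)
    (G : ℕ → SimpleGraph V)
    (hG : ∀ t, Nat.card (G t).ConnectedComponent ≤ p)
    (m : ℕ → V → α) (hm : ∀ t, m (t + 1) = step (G t) (m t)) :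
    ∀ t, p * (n - p - 1) + 1 ≤ t → (Finset.univ.image (m t)).card ≤ p := by
  intro t ht
  by_contra! hc
  have hanti : Antitone fun k => univ.image (m k) :=
    antitone_nat_of_succ_le fun k => hm k ▸ image_step_subset (G k) (m k)
  have hgrowth : ∀ k ≤ t, Phi p (m 0) + k ≤ Phi p (m k) := by
    intro k hk
    induction k with
    | zero => rfl
    | succ k ih =>
      have hstep := Phi_lt_Phi_step (hc.trans_le (card_le_card (hanti (by omega : k ≤ t)))) (hG k)
      rw [← hm] at hstep
      have := ih (by omega)
      omega
  have hranks : ∑ i ∈ range #(univ.image (m t)), (p - i)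
      ≤ ∑ i ∈ range #(univ.image (m 0)), (p - i) :=
    sum_le_sum_of_subset (range_subset_range.mpr (card_le_card (hanti (Nat.zero_le t))))
  have hslack : (Fintype.card V - #(univ.image (m t))) * p ≤ p * (n - p - 1) := by
    rw [mul_comm]
    exact Nat.mul_le_mul_left p (by omega)
  have hgrow := hgrowth t le_rfl
  have hlow := sum_range_le_Phi p (m 0)
  have hhigh := Phi_le_sum_range_add p (m t)
  omega

/-- On a `p`-partitioned dynamic network with at most `n`
processes, the min-propagation algorithm leaves at most `p` distinct values
after `p(n - p - 1) + 1` rounds. -/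
theorem p_agreement_rounds {V α : Type*} [Fintype V] [Nonempty V]
    [LinearOrder α] (n p : ℕ) (hp : 1 ≤ p) (hnp : p + 1 ≤ n)
    (hcard : Fintype.card V ≤ n)
    (G : ℕ → SimpleGraph V)
    (hG : ∀ t, Nat.card (G t).ConnectedComponent ≤ p)
    (m : ℕ → V → α) (hm : ∀ t, m (t + 1) = step (G t) (m t)) :
    ∀ t, p * (n - p - 1) + 1 ≤ t → (Finset.univ.image (m t)).card ≤ p :=
  p_agreement_rounds_general n p hcard G hG m hm
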